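/- Let n be a natural number and let a_0 ≥ a_1 ≥ … ≥ a_n be positive real numbers. Define ε_n = ∫_0^∞ 2 cos(a_0 t) ∏_{k=0}^n sinc(a_k t) dt. Then ε_0 = π/(2·a_0), and more generally ε_n = π/(2·a_0) for every n such that ∑_{k=1}^n a_k ≤ 2·a_0. -/

import Mathlib

/-!
Since `2 cos y · sinc y = 2 sinc (2y)`, `ε_n` is `a₀⁻¹ ∫₀^∞ x sinc (x t) ∏_{k=1}^n sinc (a_k t) dt`
with `x = 2 a₀`. By the product-to-sum formula, `x sinc (x t) · sinc (c t)` is the average of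
`u sinc (u t)` over `u ∈ [x - c, x + c]`; so each factor `sinc (a_k t)` replaces the integral by
its average over a window of half-width `a_k`. When `∑ a_k ≤ x` all the windows stay in
`u > 0`, where `∫₀^∞ u sinc (u t) dt` is the Dirichlet integral `π / 2`. That integral is computed
from `sinc t = ∫₀^∞ e^{-st} sin t ds` and Fubini, and the limit `R → ∞` passes through the
averages by dominated convergence, the sine integral being bounded.
-/

open MeasureTheory Filter Real Finset

noncomputable def sinc (t : ℝ) : ℝ := if t = 0 then 1 else Real.sin t / t

open Set Function Topology

lemma sinc_eq_real_sinc : _root_.sinc = Real.sinc := rfl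

noncomputable def sineIntegral (T : ℝ) : ℝ := ∫ t in (0)..T, Real.sinc t

lemma continuous_sineIntegral : Continuous sineIntegral :=
  intervalIntegral.continuous_primitive (fun _ _ => Real.continuous_sinc.intervalIntegrable _ _) 0

lemma sineIntegral_neg (T : ℝ) : sineIntegral (-T) = -sineIntegral T := by
  have := intervalIntegral.integral_comp_neg (a := 0) (b := T) Real.sinc
  simp only [Real.sinc_neg, neg_zero] at this
  rw [sineIntegral, sineIntegral, this, intervalIntegral.integral_symm]

lemma integral_exp_neg_mul_mul_sin (s T : ℝ) :
    ∫ t in (0)..T, exp (-(s * t)) * sin t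
      = (1 - exp (-(s * T)) * (cos T + s * sin T)) / (1 + s ^ 2) := by
  have hs : 1 + s ^ 2 ≠ 0 := by positivity
  have hderiv (t : ℝ) :
      HasDerivAt (fun t => -(exp (-(s * t)) * (cos t + s * sin t)) / (1 + s ^ 2))
        (exp (-(s * t)) * sin t) t := by
    have hexp : HasDerivAt (fun t => exp (-(s * t))) (exp (-(s * t)) * -s) t := by
      simpa using ((hasDerivAt_id t).const_mul s).neg.exp
    have htrig : HasDerivAt (fun t => cos t + s * sin t) (-sin t + s * cos t) t :=
      (hasDerivAt_cos t).add ((hasDerivAt_sin t).const_mul s)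
    refine ((hexp.mul htrig).neg.div_const (1 + s ^ 2)).congr_deriv ?_
    rw [div_eq_iff hs]
    ring
  rw [intervalIntegral.integral_eq_sub_of_hasDerivAt (fun t _ => hderiv t)
    ((by fun_prop : Continuous fun t => exp (-(s * t)) * sin t).intervalIntegrable 0 T)]
  simp only [mul_zero, neg_zero, exp_zero, cos_zero, sin_zero]
  ring

lemma integrableOn_exp_neg_mul_Ioi {t : ℝ} (ht : 0 < t) :
    IntegrableOn (fun s => exp (-(s * t))) (Ioi 0) := by
  simpa only [neg_mul, mul_comm t] using exp_neg_integrableOn_Ioi 0 ht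

lemma integral_exp_neg_mul_Ioi {t : ℝ} (ht : 0 < t) :
    ∫ s in Ioi 0, exp (-(s * t)) = t⁻¹ := by
  simpa [mul_comm t] using integral_exp_mul_Ioi (neg_lt_zero.2 ht) 0

lemma integrable_exp_neg_mul_mul_sin (T : ℝ) :
    Integrable (uncurry fun t s : ℝ => exp (-(s * t)) * sin t)
      ((volume.restrict (Ioc 0 T)).prod (volume.restrict (Ioi 0))) := by
  have hmeas := (by fun_prop : Continuous (uncurry fun t s : ℝ => exp (-(s * t)) * sin t))
    |>.aestronglyMeasurable (μ := (volume.restrict (Ioc 0 T)).prod (volume.restrict (Ioi 0)))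
  refine (integrable_prod_iff hmeas).2 ⟨?_, ?_⟩
  · refine (ae_restrict_iff' measurableSet_Ioc).2 (Eventually.of_forall fun t ht => ?_)
    exact (integrableOn_exp_neg_mul_Ioi ht.1).mul_const (sin t)
  · refine (integrable_const (1 : ℝ)).mono' hmeas.norm.integral_prod_right' ?_
    refine (ae_restrict_iff' measurableSet_Ioc).2 (Eventually.of_forall fun t ht => ?_)
    simp only [uncurry_apply_pair, norm_mul, norm_eq_abs, abs_exp]
    rw [integral_mul_const, integral_exp_neg_mul_Ioi ht.1, abs_mul, abs_abs, abs_inv,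
      inv_mul_le_iff₀ (abs_pos.2 ht.1.ne'), mul_one]
    exact abs_sin_le_abs

lemma sineIntegral_eq_integral_Ioi {T : ℝ} (hT : 0 ≤ T) :
    sineIntegral T = ∫ s in Ioi 0, (1 - exp (-(s * T)) * (cos T + s * sin T)) / (1 + s ^ 2) := by
  calc sineIntegral T = ∫ t in Ioc 0 T, ∫ s in Ioi 0, exp (-(s * t)) * sin t := by
        rw [sineIntegral, intervalIntegral.integral_of_le hT]
        refine setIntegral_congr_fun measurableSet_Ioc fun t ht => ?_
        rw [integral_mul_const, integral_exp_neg_mul_Ioi ht.1, Real.sinc_of_ne_zero ht.1.ne',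
          inv_mul_eq_div]
    _ = ∫ s in Ioi 0, ∫ t in Ioc 0 T, exp (-(s * t)) * sin t :=
        integral_integral_swap (integrable_exp_neg_mul_mul_sin T)
    _ = _ := by
        refine setIntegral_congr_fun measurableSet_Ioi fun s _ => ?_
        rw [← intervalIntegral.integral_of_le hT, integral_exp_neg_mul_mul_sin]

lemma abs_exp_neg_mul_mul_cos_add_div_le (s T : ℝ) :
    |exp (-(s * T)) * (cos T + s * sin T) / (1 + s ^ 2)| ≤ 2 * exp (-(s * T)) := by
  have htrig : |cos T + s * sin T| ≤ 1 + |s| := by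
    calc |cos T + s * sin T| ≤ |cos T| + |s| * |sin T| := by
          rw [← abs_mul]; exact abs_add_le _ _
      _ ≤ 1 + |s| * 1 := by
          gcongr
          · exact abs_cos_le_one T
          · exact abs_sin_le_one T
      _ = 1 + |s| := by rw [mul_one]
  have hquad : 1 + |s| ≤ 2 * (1 + s ^ 2) := by nlinarith [abs_nonneg s, sq_abs s]
  rw [abs_div, abs_mul, abs_exp, abs_of_pos (by positivity : (0 : ℝ) < 1 + s ^ 2),
    div_le_iff₀ (by positivity), mul_assoc]
  exact mul_le_mul_of_nonneg_left (htrig.trans hquad) (exp_pos _).le |>.trans_eq (by ring)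

lemma integrableOn_exp_neg_mul_mul_cos_add_div {T : ℝ} (hT : 0 < T) :
    IntegrableOn (fun s => exp (-(s * T)) * (cos T + s * sin T) / (1 + s ^ 2)) (Ioi 0) :=
  ((integrableOn_exp_neg_mul_Ioi hT).const_mul 2).mono'
    (Continuous.aestronglyMeasurable (by fun_prop (disch := intro; positivity)))
    (Eventually.of_forall fun s => abs_exp_neg_mul_mul_cos_add_div_le s T)

lemma tendsto_integral_exp_neg_mul_mul_cos_add_div :
    Tendsto (fun T => ∫ s in Ioi 0, exp (-(s * T)) * (cos T + s * sin T) / (1 + s ^ 2))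
      atTop (𝓝 0) := by
  refine squeeze_zero_norm' ?_ (by simpa using tendsto_inv_atTop_zero.const_mul (2 : ℝ))
  filter_upwards [eventually_gt_atTop 0] with T hT
  calc _ ≤ ∫ s in Ioi 0, 2 * exp (-(s * T)) :=
        norm_integral_le_of_norm_le ((integrableOn_exp_neg_mul_Ioi hT).const_mul 2)
          (Eventually.of_forall fun s => abs_exp_neg_mul_mul_cos_add_div_le s T)
    _ = 2 * T⁻¹ := by rw [integral_const_mul, integral_exp_neg_mul_Ioi hT]

lemma tendsto_sineIntegral_atTop : Tendsto sineIntegral atTop (𝓝 (π / 2)) := by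
  have hsplit : ∀ᶠ T in atTop, π / 2 - ∫ s in Ioi 0,
      exp (-(s * T)) * (cos T + s * sin T) / (1 + s ^ 2) = sineIntegral T := by
    filter_upwards [eventually_gt_atTop 0] with T hT
    have hatan := integral_Ioi_inv_one_add_sq (i := 0)
    rw [arctan_zero, sub_zero] at hatan
    rw [sineIntegral_eq_integral_Ioi hT.le, ← hatan,
      ← integral_sub integrable_inv_one_add_sq.integrableOn
        (integrableOn_exp_neg_mul_mul_cos_add_div hT)]
    simp only [sub_div, one_div]
  simpa using (tendsto_const_nhds.sub tendsto_integral_exp_neg_mul_mul_cos_add_div).congr' hsplit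

lemma tendsto_sineIntegral_atBot : Tendsto sineIntegral atBot (𝓝 (-(π / 2))) :=
  (tendsto_sineIntegral_atTop.neg.comp tendsto_neg_atBot_atTop).congr fun T => by
    simp [sineIntegral_neg]

lemma exists_abs_sineIntegral_le : ∃ M, ∀ T, |sineIntegral T| ≤ M := by
  have hO : sineIntegral =O[cocompact ℝ] (1 : ℝ → ℝ) := by
    rw [cocompact_eq_atBot_atTop]
    exact (tendsto_sineIntegral_atBot.isBigO_one ℝ).sup
      (tendsto_sineIntegral_atTop.isBigO_one ℝ)
  simpa using isBounded_iff_forall_norm_le.1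
    (continuous_sineIntegral.isBounded_range_iff_isBigO.2 hO)

lemma mul_sinc_mul_of_ne_zero (x : ℝ) {t : ℝ} (ht : t ≠ 0) :
    x * Real.sinc (x * t) = sin (x * t) / t := by
  rcases eq_or_ne x 0 with rfl | hx
  · simp
  · rw [Real.sinc_of_ne_zero (mul_ne_zero hx ht)]
    field_simp

lemma mul_sinc_mul_mul_sinc_mul (x t : ℝ) {c : ℝ} (hc : c ≠ 0) :
    x * Real.sinc (x * t) * Real.sinc (c * t)
      = (2 * c)⁻¹ * ∫ u in (x - c)..(x + c), u * Real.sinc (u * t) := by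
  rcases eq_or_ne t 0 with rfl | ht
  · simp only [mul_zero, Real.sinc_zero, mul_one, integral_id]
    field_simp
    ring
  · have hcos : cos ((x - c) * t) - cos ((x + c) * t) = 2 * sin (x * t) * sin (c * t) := by
      rw [cos_sub_cos, show ((x - c) * t + (x + c) * t) / 2 = x * t by ring,
        show ((x - c) * t - (x + c) * t) / 2 = -(c * t) by ring, sin_neg]
      ring
    simp only [mul_sinc_mul_of_ne_zero _ ht]
    rw [intervalIntegral.integral_div, intervalIntegral.integral_comp_mul_right sin ht,
      integral_sin, smul_eq_mul, hcos, Real.sinc_of_ne_zero (mul_ne_zero hc ht)]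
    field_simp

lemma intervalIntegral_integral_swap_of_continuous {f : ℝ → ℝ → ℝ}
    (hf : Continuous (uncurry f)) {a b c d : ℝ} (hab : a ≤ b) (hcd : c ≤ d) :
    ∫ x in a..b, ∫ y in c..d, f x y = ∫ y in c..d, ∫ x in a..b, f x y := by
  simp only [intervalIntegral.integral_of_le hab, intervalIntegral.integral_of_le hcd]
  refine integral_integral_swap ?_
  rw [Measure.prod_restrict, ← Measure.volume_eq_prod]
  exact (hf.continuousOn.integrableOn_compact (isCompact_Icc.prod isCompact_Icc)).mono_set
    (prod_mono Ioc_subset_Icc_self Ioc_subset_Icc_self)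

section SincProduct

variable (b : ℕ → ℝ)

noncomputable def sincProdIntegral (m : ℕ) (x R : ℝ) : ℝ :=
  ∫ t in (0)..R, x * Real.sinc (x * t) * ∏ k ∈ range m, Real.sinc (b k * t)

lemma sincProdIntegral_zero (x R : ℝ) : sincProdIntegral b 0 x R = sineIntegral (x * R) := by
  simp only [sincProdIntegral, prod_range_zero, mul_one]
  rcases eq_or_ne x 0 with rfl | hx
  · simp [sineIntegral]
  · rw [intervalIntegral.integral_const_mul,
      intervalIntegral.integral_comp_mul_left Real.sinc hx, mul_zero, smul_eq_mul,
      mul_inv_cancel_left₀ hx, sineIntegral]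

lemma continuous_sincProdIntegral (m : ℕ) (R : ℝ) :
    Continuous fun x => sincProdIntegral b m x R :=
  intervalIntegral.continuous_parametric_intervalIntegral_of_continuous' (by fun_prop) 0 R

lemma sincProdIntegral_succ {m : ℕ} (hm : 0 < b m) (x : ℝ) {R : ℝ} (hR : 0 ≤ R) :
    sincProdIntegral b (m + 1) x R
      = (2 * b m)⁻¹ * ∫ u in (x - b m)..(x + b m), sincProdIntegral b m u R := by
  have hpoint (t : ℝ) : x * Real.sinc (x * t) * ∏ k ∈ range (m + 1), Real.sinc (b k * t)
      = (2 * b m)⁻¹ * ∫ u in (x - b m)..(x + b m),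
          u * Real.sinc (u * t) * ∏ k ∈ range m, Real.sinc (b k * t) := by
    rw [prod_range_succ, mul_comm (∏ k ∈ range m, _), ← mul_assoc,
      mul_sinc_mul_mul_sinc_mul x t hm.ne', intervalIntegral.integral_mul_const, mul_assoc]
  simp only [sincProdIntegral, hpoint, intervalIntegral.integral_const_mul]
  rw [intervalIntegral_integral_swap_of_continuous (by fun_prop) hR (by linarith)]

lemma abs_sincProdIntegral_le {M : ℝ} (hM : ∀ T, |sineIntegral T| ≤ M) {m : ℕ}
    (hb : ∀ k < m, 0 < b k) (x : ℝ) {R : ℝ} (hR : 0 ≤ R) :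
    |sincProdIntegral b m x R| ≤ M := by
  induction m generalizing x with
  | zero => simpa only [sincProdIntegral_zero] using hM _
  | succ m ih =>
    have hc : 0 < b m := hb m m.lt_succ_self
    have hb' : ∀ k < m, 0 < b k := fun k hk => hb k (hk.trans m.lt_succ_self)
    have hint : ‖∫ u in (x - b m)..(x + b m), sincProdIntegral b m u R‖
        ≤ M * |x + b m - (x - b m)| :=
      intervalIntegral.norm_integral_le_of_norm_le_const fun u _ => ih hb' u
    rw [sincProdIntegral_succ b hc x hR, abs_mul, abs_of_pos (by positivity)]
    calc (2 * b m)⁻¹ * |∫ u in (x - b m)..(x + b m), sincProdIntegral b m u R|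
        ≤ (2 * b m)⁻¹ * (M * |x + b m - (x - b m)|) := by gcongr; exact hint
      _ = M := by
        rw [show x + b m - (x - b m) = 2 * b m by ring, abs_of_pos (by positivity)]
        field_simp

lemma tendsto_sincProdIntegral {m : ℕ} (hb : ∀ k < m, 0 < b k) {x : ℝ} (hx : 0 < x)
    (hsum : ∑ k ∈ range m, b k ≤ x) :
    Tendsto (fun R => sincProdIntegral b m x R) atTop (𝓝 (π / 2)) := by
  obtain ⟨M, hM⟩ := exists_abs_sineIntegral_le
  induction m generalizing x with
  | zero =>
    simp only [sincProdIntegral_zero]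
    exact tendsto_sineIntegral_atTop.comp (tendsto_id.const_mul_atTop hx)
  | succ m ih =>
    have hc : 0 < b m := hb m m.lt_succ_self
    have hb' : ∀ k < m, 0 < b k := fun k hk => hb k (hk.trans m.lt_succ_self)
    have hsum0 : 0 ≤ ∑ k ∈ range m, b k := sum_nonneg fun k hk => (hb' k (mem_range.1 hk)).le
    rw [sum_range_succ] at hsum
    have havg : Tendsto (fun R => ∫ u in (x - b m)..(x + b m), sincProdIntegral b m u R) atTop
        (𝓝 (∫ _ in (x - b m)..(x + b m), π / 2)) := by
      refine intervalIntegral.tendsto_integral_filter_of_dominated_convergence (fun _ => M)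
        (Eventually.of_forall fun R => (continuous_sincProdIntegral b m R).aestronglyMeasurable)
        ?_ intervalIntegrable_const (Eventually.of_forall fun u hu => ?_)
      · filter_upwards [eventually_ge_atTop 0] with R hR
        exact Eventually.of_forall fun u _ => abs_sincProdIntegral_le b hM hb' u hR
      · rw [uIoc_of_le (by linarith)] at hu
        exact ih hb' (by linarith [hu.1]) (by linarith [hu.1])
    have hlim := havg.const_mul (2 * b m)⁻¹
    rw [intervalIntegral.integral_const, smul_eq_mul, show x + b m - (x - b m) = 2 * b m by ring,
      ← mul_assoc, inv_mul_cancel₀ (by positivity), one_mul] at hlim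
    refine hlim.congr' ?_
    filter_upwards [eventually_ge_atTop 0] with R hR
    rw [sincProdIntegral_succ b hc x hR]

end SincProduct

lemma sinc_two_mul (y : ℝ) : Real.sinc (2 * y) = cos y * Real.sinc y := by
  rcases eq_or_ne y 0 with rfl | hy
  · simp
  · rw [Real.sinc_of_ne_zero hy, Real.sinc_of_ne_zero (mul_ne_zero two_ne_zero hy), sin_two_mul]
    field_simp

theorem eps_eq_general (n : ℕ) (a : ℕ → ℝ)
    (hpos : ∀ k ≤ n, 0 < a k)
    (hsum : (∑ k ∈ Finset.Icc 1 n, a k) ≤ 2 * a 0) :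
    Filter.Tendsto
      (fun R : ℝ => ∫ t in (0:ℝ)..R, 2 * Real.cos (a 0 * t) * _root_.sinc (a 0 * t))
      Filter.atTop (nhds (π / (2 * a 0))) ∧
    Filter.Tendsto
      (fun R : ℝ => ∫ t in (0:ℝ)..R,
        2 * Real.cos (a 0 * t) * ∏ k ∈ Finset.range (n + 1), _root_.sinc (a k * t))
      Filter.atTop (nhds (π / (2 * a 0))) := by
  have ha0 : 0 < a 0 := hpos 0 n.zero_le
  have hlimit : ∀ m ≤ n, ∑ k ∈ range m, a (k + 1) ≤ 2 * a 0 →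
      Tendsto (fun R => ∫ t in (0)..R,
          2 * cos (a 0 * t) * ∏ k ∈ range (m + 1), _root_.sinc (a k * t))
        atTop (𝓝 (π / (2 * a 0))) := by
    intro m hm hsum_m
    have hlim := (tendsto_sincProdIntegral (fun k => a (k + 1)) (fun k hk => hpos _ (by omega))
      (by positivity) hsum_m).const_mul (a 0)⁻¹
    rw [inv_mul_eq_div, div_div] at hlim
    refine hlim.congr fun R => ?_
    rw [sincProdIntegral, ← intervalIntegral.integral_const_mul]
    refine intervalIntegral.integral_congr fun t _ => ?_
    simp only [sinc_eq_real_sinc, prod_range_succ', mul_assoc 2 (a 0) t, sinc_two_mul]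
    field_simp
  refine ⟨by simpa using hlimit 0 n.zero_le (by simpa using ha0.le), hlimit n le_rfl ?_⟩
  rwa [range_eq_Ico, sum_Ico_add']

/-- If `a_0 ≥ a_1 ≥ … ≥ a_n > 0` then `ε_0 = π/(2 a_0)`, and
`ε_n = π/(2 a_0)` whenever `∑_{k=1}^n a_k ≤ 2 a_0`. -/
theorem eps_eq (n : ℕ) (a : ℕ → ℝ)
    (hpos : ∀ k ≤ n, 0 < a k)
    (hmono : ∀ k, k + 1 ≤ n → a (k + 1) ≤ a k)
    (hsum : (∑ k ∈ Finset.Icc 1 n, a k) ≤ 2 * a 0) :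
    Filter.Tendsto
      (fun R : ℝ => ∫ t in (0:ℝ)..R, 2 * Real.cos (a 0 * t) * _root_.sinc (a 0 * t))
      Filter.atTop (nhds (π / (2 * a 0))) ∧
    Filter.Tendsto
      (fun R : ℝ => ∫ t in (0:ℝ)..R,
        2 * Real.cos (a 0 * t) * ∏ k ∈ Finset.range (n + 1), _root_.sinc (a k * t))
      Filter.atTop (nhds (π / (2 * a 0))) :=
  eps_eq_general n a hpos hsum
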